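/- Let A be a synaptic algebra, let e ∈ E = {e ∈ A : 0 ≤ e ≤ 1}, and let (pₙ)_{n∈ℕ} be a sequence of projections in CC(e) satisfying 0 ≤ e − Σ_{j=1}^{n} 2^{−j} p_j ≤ 2^{−n} for every n ∈ ℕ (so that e = Σ_{n=1}^{∞} 2^{−n} pₙ in norm). Then the carrier of e is the supremum of the pₙ in the lattice of projections: e° = ⋁_{n=1}^{∞} pₙ. -/

import Mathlib

open Filter Topology

/-- The order-unit norm associated with an order relation `le` on a real algebra:
`‖a‖ = inf {λ > 0 : −λ ≤ a ≤ λ}`. -/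
noncomputable def ouNorm {R : Type*} [Ring R] [Algebra ℝ R] (le : R → R → Prop) (a : R) : ℝ :=
  sInf {l : ℝ | 0 < l ∧ le (algebraMap ℝ R (-l)) a ∧ le a (algebraMap ℝ R l)}

/-- A synaptic algebra: a real linear subspace `A` (containing `1`) of a unital associative
algebra `R` over `ℝ` (a complex algebra is in particular a real algebra), equipped with a
partial order making it an Archimedean partially ordered real linear space with order unit `1`,
and satisfying axioms SA1–SA8.  The square root (SA5) and the carrier (SA6) are bundled as
data together with their defining properties. -/
structure SynapticAlgebra (R : Type*) [Ring R] [Algebra ℝ R] where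
  A : Submodule ℝ R
  one_mem : (1 : R) ∈ A
  /-- the synaptic order (meaningful on elements of `A`) -/
  le : R → R → Prop
  -- SA1 : Archimedean partially ordered real linear space with order unit 1
  le_refl : ∀ a ∈ A, le a a
  le_antisymm : ∀ a ∈ A, ∀ b ∈ A, le a b → le b a → a = b
  le_trans : ∀ a ∈ A, ∀ b ∈ A, ∀ c ∈ A, le a b → le b c → le a c
  add_le_add_right : ∀ a ∈ A, ∀ b ∈ A, ∀ c ∈ A, le a b → le (a + c) (b + c)
  smul_nonneg : ∀ r : ℝ, 0 ≤ r → ∀ a ∈ A, le 0 a → le 0 (r • a)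
  arch : ∀ a ∈ A, ∀ b ∈ A, (∀ n : ℕ, le ((n : ℝ) • a) b) → le a 0
  one_order_unit : ∀ a ∈ A, ∃ n : ℕ, le a ((n : ℝ) • (1 : R))
  zero_ne_one : (0 : R) ≠ 1
  -- SA2
  sq_mem : ∀ a ∈ A, a * a ∈ A
  sq_nn : ∀ a ∈ A, le 0 (a * a)
  -- SA3
  quad_mem : ∀ a ∈ A, ∀ b ∈ A, a * b * a ∈ A
  quad_nn : ∀ a ∈ A, ∀ b ∈ A, le 0 a → le 0 b → le 0 (a * b * a)
  -- SA4
  quad_zero : ∀ a ∈ A, ∀ b ∈ A, le 0 b → a * b * a = 0 → a * b = 0 ∧ b * a = 0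
  -- SA5 : square roots
  sqrt : R → R
  sqrt_mem : ∀ a ∈ A, le 0 a → sqrt a ∈ A
  sqrt_nn : ∀ a ∈ A, le 0 a → le 0 (sqrt a)
  sqrt_sq : ∀ a ∈ A, le 0 a → sqrt a * sqrt a = a
  sqrt_bicomm : ∀ a ∈ A, le 0 a → ∀ b ∈ A, a * b = b * a → sqrt a * b = b * sqrt a
  sqrt_unique : ∀ a ∈ A, le 0 a → ∀ b ∈ A, le 0 b → b * b = a →
    (∀ c ∈ A, a * c = c * a → b * c = c * b) → b = sqrt a
  -- SA6 : carriers
  carr : R → R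
  carr_mem : ∀ a ∈ A, carr a ∈ A
  carr_idem : ∀ a ∈ A, carr a * carr a = carr a
  carr_spec : ∀ a ∈ A, ∀ b ∈ A, (a * b = 0 ↔ carr a * b = 0)
  -- SA7
  inv_exists : ∀ a ∈ A, le 1 a → ∃ b ∈ A, a * b = 1 ∧ b * a = 1
  -- SA8
  comm_closed : ∀ a ∈ A, ∀ b ∈ A, ∀ f : ℕ → R, (∀ n, f n ∈ A) →
    (∀ n, le (f n) (f (n + 1))) → (∀ m n, f m * f n = f n * f m) →
    (∀ n, f n * b = b * f n) →
    Filter.Tendsto (fun n => ouNorm le (a - f n)) Filter.atTop (nhds 0) →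
    a * b = b * a

namespace SynapticAlgebra

variable {R : Type*} [Ring R] [Algebra ℝ R] (S : SynapticAlgebra R)

/-- `|a| := (a²)^{1/2}`. -/
def absval (a : R) : R := S.sqrt (a * a)

/-- The positive part `a⁺ := (|a| + a)/2`. -/
noncomputable def pospart (a : R) : R := (2⁻¹ : ℝ) • (S.absval a + a)

/-- The spectral resolution `p_{a,λ} := 1 − ((a − λ)⁺)°`. -/
noncomputable def specProj (a : R) (l : ℝ) : R :=
  1 - S.carr (S.pospart (a - algebraMap ℝ R l))

/-- The spectral order: `a ≤ₛ b` iff `p_{b,λ} ≤ p_{a,λ}` for all real `λ`. -/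
noncomputable def specLE (a b : R) : Prop :=
  ∀ l : ℝ, S.le (S.specProj b l) (S.specProj a l)

/-- Projections of the synaptic algebra. -/
def IsProj (p : R) : Prop := p ∈ S.A ∧ p * p = p

/-- The set `E = {e ∈ A : 0 ≤ e ≤ 1}` of effects. -/
def effects : Set R := {e | e ∈ S.A ∧ S.le 0 e ∧ S.le e 1}

/-- `p` is the infimum of the set `T` in the orthomodular lattice `P` of projections. -/
def IsProjInf (p : R) (T : Set R) : Prop :=
  S.IsProj p ∧ (∀ q ∈ T, S.le p q) ∧ ∀ r, S.IsProj r → (∀ q ∈ T, S.le r q) → S.le r p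

/-- `p` is the supremum of the set `T` in the orthomodular lattice `P` of projections. -/
def IsProjSup (p : R) (T : Set R) : Prop :=
  S.IsProj p ∧ (∀ q ∈ T, S.le q p) ∧ ∀ r, S.IsProj r → (∀ q ∈ T, S.le q r) → S.le p r

/-- A Banach (norm-complete) synaptic algebra: every Cauchy sequence in `A`
(w.r.t. the order-unit norm) converges in norm to an element of `A`. -/
noncomputable def IsBanach : Prop :=
  ∀ f : ℕ → R, (∀ n, f n ∈ S.A) →
    (∀ ε : ℝ, 0 < ε → ∃ N : ℕ, ∀ m ≥ N, ∀ n ≥ N, ouNorm S.le (f m - f n) < ε) →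
    ∃ a ∈ S.A, Filter.Tendsto (fun n => ouNorm S.le (a - f n)) Filter.atTop (nhds 0)

/-- The `λ`-eigenprojection `d_{a,λ} := 1 − (a − λ)°`. -/
noncomputable def eigenProj (a : R) (l : ℝ) : R := 1 - S.carr (a - algebraMap ℝ R l)

/-- The bicommutant `CC(a)` (within `A`). -/
def Bicomm (a : R) : Set R :=
  {b | b ∈ S.A ∧ ∀ c ∈ S.A, a * c = c * a → b * c = c * b}

/-- Projections `p` and `q` are exchanged by a symmetry (`s² = 1`, `sps = q`). -/
def ExchBySymm (p q : R) : Prop := ∃ s ∈ S.A, s * s = 1 ∧ s * p * s = q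

/-- The dimension equivalence on projections: a finite chain of projections, consecutive
ones exchanged by symmetries. -/
def DimEquiv (p q : R) : Prop :=
  ∃ (n : ℕ) (c : ℕ → R), c 0 = p ∧ c n = q ∧ (∀ i ≤ n, S.IsProj (c i)) ∧
    ∀ i < n, S.ExchBySymm (c i) (c (i + 1))

/-- `A` is of finite type iff every projection is finite. -/
def FiniteType : Prop :=
  ∀ p, S.IsProj p → ∀ q, S.IsProj q → S.DimEquiv q p → S.le q p → q = p

/-- The projection lattice `P` is a complete orthomodular lattice: every set of projections
has an infimum and a supremum in `P`. -/
def ProjComplete : Prop :=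
  ∀ T : Set R, (∀ p ∈ T, S.IsProj p) →
    (∃ q, S.IsProjInf q T) ∧ (∃ q, S.IsProjSup q T)

/-- A bounded resolution of identity with bound `K`. -/
def IsBoundedResId (p : ℝ → R) (K : ℝ) : Prop :=
  0 ≤ K ∧ (∀ l, S.IsProj (p l)) ∧
  (∀ l, l < -K → p l = 0) ∧ (∀ l, K ≤ l → p l = 1) ∧
  (∀ l l', l ≤ l' → S.le (p l) (p l')) ∧
  (∀ l, S.IsProjInf (p l) {x | ∃ l' > l, x = p l'})

end SynapticAlgebra

/-- `c` is a regular involution on the subset `T` of the poset `(T, le')`. -/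
def IsRegInvPoset {R : Type*} (le' : R → R → Prop) (T : Set R) (c : R → R) : Prop :=
  (∀ a ∈ T, c a ∈ T) ∧ (∀ a ∈ T, c (c a) = a) ∧
  (∀ a ∈ T, ∀ b ∈ T, le' a b → le' (c b) (c a)) ∧
  (∀ a ∈ T, ∀ b ∈ T, le' a (c a) → le' b (c b) → le' a (c b))

/-- `(T, le', c, 0, 1)` is a Kleene poset: a bounded poset with a regular involution. -/
def IsKleene {R : Type*} [Zero R] [One R] (le' : R → R → Prop) (T : Set R) (c : R → R) : Prop :=
  IsRegInvPoset le' T c ∧ (0 : R) ∈ T ∧ (1 : R) ∈ T ∧ ∀ a ∈ T, le' 0 a ∧ le' a 1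

/-- Every pair of elements of `T` has an infimum and a supremum in `(T, le')`. -/
def HasBinSupInf {R : Type*} (le' : R → R → Prop) (T : Set R) : Prop :=
  ∀ a ∈ T, ∀ b ∈ T,
    (∃ m ∈ T, le' m a ∧ le' m b ∧ ∀ x ∈ T, le' x a → le' x b → le' x m) ∧
    (∃ j ∈ T, le' a j ∧ le' b j ∧ ∀ x ∈ T, le' a x → le' b x → le' j x)

/-!
The `pₙ` are dominated by the carrier because `2⁻ⁿ pₙ ≤ e`, and a projection lying under a
positive multiple of `e` is annihilated by the compression with `1 - e°`. Conversely, if every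
`pₙ` lies under a projection `r`, then each partial sum `sₙ` is a convex combination of the `pₙ`
and `0`, so `e ≤ sₙ + 2⁻ⁿ ≤ r + 2⁻ⁿ`; the Archimedean property gives `e ≤ r`, hence `e° ≤ r`.
-/

theorem Finset.sum_Icc_one_div_two_pow (n : ℕ) :
    ∑ j ∈ Finset.Icc 1 n, (1 : ℝ) / 2 ^ j = 1 - 1 / 2 ^ n := by
  induction n with
  | zero => simp
  | succ n ih =>
    rw [Finset.sum_Icc_succ_top (by omega), ih, pow_succ]
    field_simp
    ring

namespace SynapticAlgebra

variable {R : Type*} [Ring R] [Algebra ℝ R] (S : SynapticAlgebra R)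

theorem sub_nonneg_iff {a b : R} (ha : a ∈ S.A) (hb : b ∈ S.A) :
    S.le 0 (b - a) ↔ S.le a b := by
  constructor
  · intro h
    simpa using S.add_le_add_right 0 S.A.zero_mem (b - a) (S.A.sub_mem hb ha) a ha h
  · intro h
    simpa [← sub_eq_add_neg] using S.add_le_add_right a ha b hb (-a) (S.A.neg_mem ha) h

theorem add_nonneg {a b : R} (ha : a ∈ S.A) (hb : b ∈ S.A) (ha0 : S.le 0 a) (hb0 : S.le 0 b) :
    S.le 0 (a + b) :=
  S.le_trans 0 S.A.zero_mem b hb (a + b) (S.A.add_mem ha hb) hb0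
    (by simpa using S.add_le_add_right 0 S.A.zero_mem a ha b hb ha0)

theorem sum_nonneg {ι : Type*} (s : Finset ι) {x : ι → R} (hx : ∀ j ∈ s, x j ∈ S.A)
    (hx0 : ∀ j ∈ s, S.le 0 (x j)) : S.le 0 (∑ j ∈ s, x j) := by
  classical
  induction s using Finset.induction_on with
  | empty => simpa using S.le_refl 0 S.A.zero_mem
  | insert i s hi ih =>
    rw [Finset.sum_insert hi]
    simp only [Finset.mem_insert, forall_eq_or_imp] at hx hx0
    exact S.add_nonneg hx.1 (Submodule.sum_mem _ hx.2) hx0.1 (ih hx.2 hx0.2)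

theorem le_sum_of_mem {ι : Type*} [DecidableEq ι] {s : Finset ι} {x : ι → R}
    (hx : ∀ j ∈ s, x j ∈ S.A) (hx0 : ∀ j ∈ s, S.le 0 (x j)) {i : ι} (hi : i ∈ s) :
    S.le (x i) (∑ j ∈ s, x j) := by
  rw [← S.sub_nonneg_iff (hx i hi) (Submodule.sum_mem _ hx), ← Finset.sum_erase_eq_sub hi]
  exact S.sum_nonneg _ (fun j hj => hx j (Finset.mem_of_mem_erase hj))
    (fun j hj => hx0 j (Finset.mem_of_mem_erase hj))

theorem sum_smul_le {ι : Type*} (s : Finset ι) {w : ι → ℝ} {x : ι → R} {r : R}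
    (hw : ∀ j ∈ s, 0 ≤ w j) (hw1 : ∑ j ∈ s, w j ≤ 1) (hx : ∀ j ∈ s, x j ∈ S.A)
    (hxr : ∀ j ∈ s, S.le (x j) r) (hr : r ∈ S.A) (hr0 : S.le 0 r) :
    S.le (∑ j ∈ s, w j • x j) r := by
  have hdiff : ∀ j ∈ s, r - x j ∈ S.A := fun j hj => S.A.sub_mem hr (hx j hj)
  have hsplit : r - ∑ j ∈ s, w j • x j
      = (1 - ∑ j ∈ s, w j) • r + ∑ j ∈ s, w j • (r - x j) := by
    simp only [sub_smul, one_smul, smul_sub, Finset.sum_sub_distrib, Finset.sum_smul]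
    abel
  rw [← S.sub_nonneg_iff (Submodule.sum_mem _ fun j hj => S.A.smul_mem _ (hx j hj)) hr, hsplit]
  refine S.add_nonneg (S.A.smul_mem _ hr)
    (Submodule.sum_mem _ fun j hj => S.A.smul_mem _ (hdiff j hj))
    (S.smul_nonneg _ (sub_nonneg.2 hw1) r hr hr0)
    (S.sum_nonneg s (fun j hj => S.A.smul_mem _ (hdiff j hj)) fun j hj => ?_)
  exact S.smul_nonneg _ (hw j hj) _ (hdiff j hj)
    ((S.sub_nonneg_iff (hx j hj) hr).2 (hxr j hj))

theorem smul_le_smul_of_nonneg_left {t : ℝ} (ht : 0 ≤ t) {a b : R} (ha : a ∈ S.A)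
    (hb : b ∈ S.A) (h : S.le a b) : S.le (t • a) (t • b) := by
  rw [← S.sub_nonneg_iff (S.A.smul_mem t ha) (S.A.smul_mem t hb), ← smul_sub]
  exact S.smul_nonneg t ht _ (S.A.sub_mem hb ha) ((S.sub_nonneg_iff ha hb).2 h)

theorem sub_le_iff_le_add {a b c : R} (ha : a ∈ S.A) (hb : b ∈ S.A) (hc : c ∈ S.A) :
    S.le (a - b) c ↔ S.le a (b + c) := by
  rw [← S.sub_nonneg_iff (S.A.sub_mem ha hb) hc, ← S.sub_nonneg_iff ha (S.A.add_mem hb hc),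
    show c - (a - b) = b + c - a by abel]

theorem one_nonneg : S.le 0 1 := by
  simpa using S.sq_nn 1 S.one_mem

theorem smul_one_le_smul_one {s t : ℝ} (h : s ≤ t) : S.le (s • (1 : R)) (t • 1) := by
  rw [← S.sub_nonneg_iff (S.A.smul_mem s S.one_mem) (S.A.smul_mem t S.one_mem), ← sub_smul]
  exact S.smul_nonneg _ (sub_nonneg.2 h) 1 S.one_mem S.one_nonneg

theorem le_of_forall_le_add_one_div_two_pow {a b : R} (ha : a ∈ S.A) (hb : b ∈ S.A)
    (h : ∀ n : ℕ, S.le a (b + ((1 : ℝ) / 2 ^ n) • (1 : R))) : S.le a b := by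
  have hdA : a - b ∈ S.A := S.A.sub_mem ha hb
  have hunit : ∀ t : ℝ, t • (1 : R) ∈ S.A := fun t => S.A.smul_mem t S.one_mem
  have hd : S.le (a - b) 0 := S.arch _ hdA 1 S.one_mem fun m => by
    have hm := (S.sub_le_iff_le_add ha hb (hunit _)).2 (h m)
    have h1 := S.smul_le_smul_of_nonneg_left m.cast_nonneg hdA (hunit _) hm
    rw [smul_smul] at h1
    have h2 : S.le (((m : ℝ) * (1 / 2 ^ m)) • (1 : R)) ((1 : ℝ) • 1) := by
      refine S.smul_one_le_smul_one ?_
      rw [mul_one_div, div_le_one (by positivity)]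
      exact_mod_cast Nat.lt_two_pow_self.le
    rw [one_smul] at h2
    exact S.le_trans _ (S.A.smul_mem _ hdA) _ (hunit _) _ S.one_mem h1 h2
  rwa [S.sub_le_iff_le_add ha hb S.A.zero_mem, add_zero] at hd

variable {S}

theorem IsProj.nonneg {q : R} (hq : S.IsProj q) : S.le 0 q := by
  simpa [hq.2] using S.sq_nn q hq.1

theorem IsProj.one_sub {q : R} (hq : S.IsProj q) : S.IsProj (1 - q) :=
  ⟨S.A.sub_mem S.one_mem hq.1, by simp only [sub_mul, mul_sub, one_mul, mul_one, hq.2]; abel⟩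

theorem IsProj.le_of_compress_one_sub_eq_zero {q r : R} (hq : S.IsProj q) (hr : S.IsProj r)
    (h : (1 - r) * q * (1 - r) = 0) : S.le q r := by
  obtain ⟨hleft, hright⟩ := S.quad_zero (1 - r) hr.one_sub.1 q hq.1 hq.nonneg h
  have hrq : r * q = q := (sub_eq_zero.1 (by rwa [sub_mul, one_mul] at hleft)).symm
  have hqr : q * r = q := (sub_eq_zero.1 (by rwa [mul_sub, mul_one] at hright)).symm
  have hcompress : (1 - q) * r * (1 - q) = r - q := by
    simp only [sub_mul, mul_sub, one_mul, mul_one, hrq, hqr, hq.2]; abel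
  rw [← S.sub_nonneg_iff hq.1 hr.1, ← hcompress]
  exact S.quad_nn _ hq.one_sub.1 r hr.1 hq.one_sub.nonneg hr.nonneg

theorem compress_eq_zero_of_le {a x y : R} (ha : a ∈ S.A) (ha0 : S.le 0 a) (hx : x ∈ S.A)
    (hy : y ∈ S.A) (hx0 : S.le 0 x) (hxy : S.le x y) (hay : a * y * a = 0) :
    a * x * a = 0 := by
  have hdiff : S.le 0 (a * (y - x) * a) :=
    S.quad_nn a ha _ (S.A.sub_mem hy hx) ha0 ((S.sub_nonneg_iff hx hy).2 hxy)
  rw [mul_sub, sub_mul, hay, zero_sub, ← zero_sub,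
    S.sub_nonneg_iff (S.quad_mem a ha x hx) S.A.zero_mem] at hdiff
  exact S.le_antisymm _ (S.quad_mem a ha x hx) 0 S.A.zero_mem hdiff (S.quad_nn a ha x hx ha0 hx0)

theorem carr_isProj {a : R} (ha : a ∈ S.A) : S.IsProj (S.carr a) :=
  ⟨S.carr_mem a ha, S.carr_idem a ha⟩

theorem mul_one_sub_carr {a : R} (ha : a ∈ S.A) : a * (1 - S.carr a) = 0 :=
  (S.carr_spec a ha _ (carr_isProj ha).one_sub.1).2
    (by rw [mul_sub, mul_one, S.carr_idem a ha, sub_self])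

theorem one_sub_carr_mul {a : R} (ha : a ∈ S.A) (ha0 : S.le 0 a) : (1 - S.carr a) * a = 0 :=
  (S.quad_zero _ (carr_isProj ha).one_sub.1 a ha ha0
    (by rw [mul_assoc, mul_one_sub_carr ha, mul_zero])).1

theorem le_carr_of_smul_le {e q : R} (he : e ∈ S.A) (he0 : S.le 0 e) (hq : S.IsProj q)
    {c : ℝ} (hc : 0 < c) (h : S.le (c • q) e) : S.le q (S.carr e) := by
  have hcompl := (carr_isProj he).one_sub
  have hcq : (1 - S.carr e) * (c • q) * (1 - S.carr e) = 0 :=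
    compress_eq_zero_of_le hcompl.1 hcompl.nonneg (S.A.smul_mem c hq.1) he
      (S.smul_nonneg c hc.le q hq.1 hq.nonneg) h (by rw [one_sub_carr_mul he he0, zero_mul])
  rw [mul_smul_comm, smul_mul_assoc, smul_eq_zero] at hcq
  exact hq.le_of_compress_one_sub_eq_zero (carr_isProj he) (hcq.resolve_left hc.ne')

theorem carr_le_of_le {e r : R} (he : e ∈ S.A) (he0 : S.le 0 e) (hr : S.IsProj r)
    (h : S.le e r) : S.le (S.carr e) r := by
  have hcompl := hr.one_sub
  have hre : (1 - r) * e * (1 - r) = 0 :=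
    compress_eq_zero_of_le hcompl.1 hcompl.nonneg he hr.1 he0 h
      (by rw [sub_mul, one_mul, hr.2, sub_self, zero_mul])
  have hec : S.carr e * (1 - r) = 0 :=
    (S.carr_spec e he _ hcompl.1).1 (S.quad_zero _ hcompl.1 e he he0 hre).2
  exact (carr_isProj he).le_of_compress_one_sub_eq_zero hr (by rw [mul_assoc, hec, mul_zero])

end SynapticAlgebra

/-- If `e = Σ 2⁻ⁿ pₙ` is the dyadic decomposition of an effect `e` by
projections `pₙ ∈ CC(e)` (with the partial-sum bounds), then `e° = ⋁ₙ pₙ` in `P`. -/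
theorem carrier_eq_sup_dyadic {R : Type*} [Ring R] [Algebra ℝ R]
    (S : SynapticAlgebra R) (e : R) (he : e ∈ S.effects) (p : ℕ → R)
    (hp : ∀ n : ℕ, S.IsProj (p n) ∧ p n ∈ S.Bicomm e)
    (hbd : ∀ n : ℕ,
      S.le 0 (e - ∑ j ∈ Finset.Icc 1 n, ((1 : ℝ) / 2 ^ j) • p j) ∧
      S.le (e - ∑ j ∈ Finset.Icc 1 n, ((1 : ℝ) / 2 ^ j) • p j)
        (((1 : ℝ) / 2 ^ n) • (1 : R))) :
    S.IsProjSup (S.carr e) {x | ∃ n : ℕ, 1 ≤ n ∧ x = p n} := by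
  obtain ⟨heA, he0, -⟩ := he
  have htermA : ∀ j, ((1 : ℝ) / 2 ^ j) • p j ∈ S.A := fun j => S.A.smul_mem _ (hp j).1.1
  have hsumA : ∀ n, ∑ j ∈ Finset.Icc 1 n, ((1 : ℝ) / 2 ^ j) • p j ∈ S.A :=
    fun n => Submodule.sum_mem _ fun j _ => htermA j
  refine ⟨S.carr_isProj heA, ?_, fun r hr hub => ?_⟩
  · rintro _ ⟨n, hn, rfl⟩
    have hterm_le_sum := S.le_sum_of_mem (fun j _ => htermA j)
      (fun j _ => S.smul_nonneg _ (by positivity) _ (hp j).1.1 (hp j).1.nonneg)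
      (Finset.mem_Icc.2 ⟨hn, le_rfl⟩)
    exact S.le_carr_of_smul_le heA he0 (hp n).1 (by positivity) <|
      S.le_trans _ (htermA n) _ (hsumA n) _ heA hterm_le_sum
        ((S.sub_nonneg_iff (hsumA n) heA).1 (hbd n).1)
  refine S.carr_le_of_le heA he0 hr (S.le_of_forall_le_add_one_div_two_pow heA hr.1 fun n => ?_)
  have hunitA : ((1 : ℝ) / 2 ^ n) • (1 : R) ∈ S.A := S.A.smul_mem _ S.one_mem
  have hsum_le : S.le (∑ j ∈ Finset.Icc 1 n, ((1 : ℝ) / 2 ^ j) • p j) r :=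
    S.sum_smul_le _ (fun j _ => by positivity)
      (by rw [Finset.sum_Icc_one_div_two_pow]; simp only [sub_le_self_iff]; positivity)
      (fun j _ => (hp j).1.1) (fun j hj => hub _ ⟨j, (Finset.mem_Icc.1 hj).1, rfl⟩)
      hr.1 hr.nonneg
  have he_le := (S.sub_le_iff_le_add heA (hsumA n) hunitA).1 (hbd n).2
  exact S.le_trans _ heA _ (S.A.add_mem (hsumA n) hunitA) _ (S.A.add_mem hr.1 hunitA) he_le
    (S.add_le_add_right _ (hsumA n) _ hr.1 _ hunitA hsum_le)
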